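/- arXiv:2006.13820 — 8 statements merged into one kernel-verified Lean document; each statement's English description precedes it below -/
import Mathlib

section
/- Let B ∈ ℝ^{n×(m−p)}, C ∈ ℝ^{n×p}, x₀, x_goal ∈ ℝⁿ, ε ≥ 0 and T > 0. The target ball G = {x ∈ ℝⁿ : ‖x − x_goal‖ ≤ ε} is resiliently reachable at time T from x₀ (i.e., for every measurable w : [0,T] → ℝᵖ with ∫₀ᵀ‖w(t)‖²dt ≤ 1 there exists a measurable u : [0,T] → ℝ^{m−p} with ∫₀ᵀ‖u(t)‖²dt ≤ 1 such that ‖x₀ + ∫₀ᵀ(Bu(t) + Cw(t))dt − x_goal‖ ≤ ε) if and only if max over unit vectors h ∈ ℝⁿ of ( ⟨h, x₀ − x_goal⟩ − √T·‖Bᵀh‖ + √T·‖Cᵀh‖ ) is at most ε. -/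
open MeasureTheory Matrix

/-- Euclidean norm of a vector in `ℝ^k`. -/
noncomputable def eNorm {k : ℕ} (v : Fin k → ℝ) : ℝ := Real.sqrt (∑ i, (v i) ^ 2)

/-- A square-integrable signal on `[0,T]` with `L²` norm at most `1`. -/
def Admissible {k : ℕ} (T : ℝ) (f : ℝ → Fin k → ℝ) : Prop :=
  Measurable f ∧ IntegrableOn (fun t => (eNorm (f t)) ^ 2) (Set.Ioc 0 T) ∧
    (∫ t in Set.Ioc (0 : ℝ) T, (eNorm (f t)) ^ 2) ≤ 1

/-- The target ball of center `xgoal` and radius `ε` is resiliently reachable at time `T`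
from `x₀` for the driftless system `ẋ = Bu + Cw`. -/
def ResilientlyReachableAt {n q p : ℕ} (B : Matrix (Fin n) (Fin q) ℝ)
    (C : Matrix (Fin n) (Fin p) ℝ) (x₀ xgoal : Fin n → ℝ) (ε T : ℝ) : Prop :=
  ∀ w : ℝ → Fin p → ℝ, Admissible T w →
    ∃ u : ℝ → Fin q → ℝ, Admissible T u ∧
      eNorm ((x₀ + ∫ t in Set.Ioc (0 : ℝ) T, (B.mulVec (u t) + C.mulVec (w t))) - xgoal) ≤ ε

/-!
The endpoint depends on the signals only through their integrals `∫ u` and `∫ w`, and these range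
exactly over the closed ball of radius `√T`: Cauchy–Schwarz bounds them, and constant signals
attain every point of the ball. Resilient reachability thus becomes the finite-dimensional
condition `∀ ξ ∈ B̄(0, √T), ∃ η ∈ B̄(0, √T), ‖x₀ - xgoal + Cξ + Bη‖ ≤ ε`. For fixed `ξ`, the
compact convex set `x₀ - xgoal + Cξ + B(B̄(0, √T))` meets the ball `B̄(0, ε)` iff it is not
separated from it by a hyperplane; a separating direction is obtained from the point of the set
nearest to the origin. Taking the supremum over `ξ` of `⟪h, Cξ⟫ = ⟪Cᵀh, ξ⟫` gives the term
`√T ‖Cᵀh‖`.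
-/

open Metric RealInnerProductSpace WithLp

section Geometry

variable {E E' F : Type*} [NormedAddCommGroup E] [InnerProductSpace ℝ E]
  [NormedAddCommGroup E'] [InnerProductSpace ℝ E'] [NormedAddCommGroup F] [InnerProductSpace ℝ F]

theorem exists_mem_closedBall_inner_eq (g : E) {r : ℝ} (hr : 0 ≤ r) :
    ∃ ξ ∈ closedBall (0 : E) r, ⟪g, ξ⟫ = r * ‖g‖ := by
  refine ⟨(r * ‖g‖⁻¹) • g, ?_, ?_⟩
  · rw [mem_closedBall_zero_iff, norm_smul, Real.norm_of_nonneg (by positivity), mul_assoc]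
    exact mul_le_of_le_one_right hr (inv_mul_le_one_of_le₀ le_rfl (norm_nonneg g))
  · rw [real_inner_smul_right, real_inner_self_eq_norm_sq]
    rcases eq_or_ne ‖g‖ 0 with hg | hg
    · simp [hg]
    · field_simp

theorem forall_mem_closedBall_inner_le_iff (g : E) {r a : ℝ} (hr : 0 ≤ r) :
    (∀ ξ ∈ closedBall (0 : E) r, ⟪g, ξ⟫ ≤ a) ↔ r * ‖g‖ ≤ a := by
  refine ⟨fun H => ?_, fun H ξ hξ => ?_⟩
  · obtain ⟨ξ, hξ, hgξ⟩ := exists_mem_closedBall_inner_eq g hr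
    exact hgξ ▸ H ξ hξ
  · calc ⟪g, ξ⟫ ≤ ‖g‖ * ‖ξ‖ := real_inner_le_norm g ξ
      _ ≤ ‖g‖ * r := by gcongr; exact mem_closedBall_zero_iff.mp hξ
      _ ≤ a := by linarith

theorem exists_mem_norm_add_le_of_forall_exists_inner_le {K : Set F} (hne : K.Nonempty)
    (hKc : IsComplete K) (hK : Convex ℝ K) (v : F) {ε : ℝ} (hε : 0 ≤ ε)
    (H : ∀ h : F, ‖h‖ = 1 → ∃ k ∈ K, ⟪h, v + k⟫ ≤ ε) : ∃ k ∈ K, ‖v + k‖ ≤ ε := by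
  obtain ⟨k₀, hk₀, hmin⟩ := exists_norm_eq_iInf_of_complete_convex hne hKc hK (-v)
  have hvar := (norm_eq_iInf_iff_real_inner_le_zero hK hk₀).mp hmin
  refine ⟨k₀, hk₀, not_lt.mp fun hy => ?_⟩
  have hy₀ : 0 < ‖v + k₀‖ := hε.trans_lt hy
  obtain ⟨k, hk, hle⟩ := H (‖v + k₀‖⁻¹ • (v + k₀))
    (by rw [norm_smul, norm_inv, norm_norm, inv_mul_cancel₀ hy₀.ne'])
  -- `k₀` is the point of `K` nearest to `-v`, so `⟪v + k₀, k - k₀⟫ ≥ 0`.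
  have hk' : 0 ≤ ⟪v + k₀, k - k₀⟫ := by
    have := hvar k hk
    rw [show -v - k₀ = -(v + k₀) by abel, inner_neg_left] at this
    linarith
  have hge : ‖v + k₀‖ ≤ ⟪‖v + k₀‖⁻¹ • (v + k₀), v + k⟫ := by
    rw [real_inner_smul_left, show v + k = (v + k₀) + (k - k₀) by abel, inner_add_right,
      real_inner_self_eq_norm_sq, le_inv_mul_iff₀ hy₀]
    nlinarith
  linarith

variable [FiniteDimensional ℝ E] [FiniteDimensional ℝ E'] [FiniteDimensional ℝ F]

theorem exists_mem_closedBall_norm_add_le_iff (L : E →ₗ[ℝ] F) (v : F) {r ε : ℝ} (hr : 0 ≤ r)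
    (hε : 0 ≤ ε) :
    (∃ η ∈ closedBall (0 : E) r, ‖v + L η‖ ≤ ε) ↔
      ∀ h : F, ‖h‖ = 1 → ⟪h, v⟫ - r * ‖L.adjoint h‖ ≤ ε := by
  constructor
  · rintro ⟨η, hη, hvη⟩ h hh
    have hL : -⟪L.adjoint h, η⟫ ≤ r * ‖L.adjoint h‖ := by
      rw [← inner_neg_right]
      exact (forall_mem_closedBall_inner_le_iff _ hr).mpr le_rfl (-η) (by simpa using hη)
    have hv : ⟪h, v + L η⟫ ≤ ε := (real_inner_le_norm h _).trans (by rwa [hh, one_mul])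
    rw [inner_add_right, ← LinearMap.adjoint_inner_left] at hv
    linarith
  · intro H
    have hKc : IsCompact (L '' closedBall 0 r) :=
      (isCompact_closedBall 0 r).image L.continuous_of_finiteDimensional
    obtain ⟨_, ⟨η, hη, rfl⟩, hvη⟩ := exists_mem_norm_add_le_of_forall_exists_inner_le
      ((nonempty_closedBall.mpr hr).image L) hKc.isComplete
      ((convex_closedBall 0 r).linear_image L) v hε
      fun h hh => by
        obtain ⟨ξ, hξ, hLξ⟩ := exists_mem_closedBall_inner_eq (L.adjoint h) hr
        refine ⟨L (-ξ), ⟨-ξ, by simpa using hξ, rfl⟩, ?_⟩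
        rw [inner_add_right, map_neg, inner_neg_right, ← LinearMap.adjoint_inner_left, hLξ]
        exact H h hh
    exact ⟨η, hη, hvη⟩

theorem forall_exists_mem_closedBall_norm_add_add_le_iff (L : E →ₗ[ℝ] F) (M : E' →ₗ[ℝ] F)
    (v : F) {r ε : ℝ} (hr : 0 ≤ r) (hε : 0 ≤ ε) :
    (∀ ξ ∈ closedBall (0 : E') r, ∃ η ∈ closedBall (0 : E) r, ‖v + M ξ + L η‖ ≤ ε) ↔
      ∀ h : F, ‖h‖ = 1 → ⟪h, v⟫ - r * ‖L.adjoint h‖ + r * ‖M.adjoint h‖ ≤ ε := by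
  simp only [exists_mem_closedBall_norm_add_le_iff L _ hr hε, inner_add_right,
    ← LinearMap.adjoint_inner_left M]
  refine ⟨fun H h hh => ?_, fun H ξ hξ h hh => ?_⟩
  · have := (forall_mem_closedBall_inner_le_iff (M.adjoint h) hr
      (a := ε - ⟪h, v⟫ + r * ‖L.adjoint h‖)).mp fun ξ hξ => by linarith [H ξ hξ h hh]
    linarith
  · have := (forall_mem_closedBall_inner_le_iff (M.adjoint h) hr).mpr le_rfl ξ hξ
    linarith [H h hh]

end Geometry

section Signals

theorem eNorm_eq_norm {k : ℕ} (v : Fin k → ℝ) : eNorm v = ‖toLp 2 v‖ := by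
  simp [eNorm, EuclideanSpace.norm_eq]

theorem norm_integral_le_sqrt_measureReal_univ {α E : Type*} [MeasurableSpace α]
    [NormedAddCommGroup E] [NormedSpace ℝ E] {μ : Measure α} [IsFiniteMeasure μ] {f : α → E}
    (hf : Integrable (fun x => ‖f x‖ ^ 2) μ) (h1 : ∫ x, ‖f x‖ ^ 2 ∂μ ≤ 1) :
    ‖∫ x, f x ∂μ‖ ≤ √(μ.real Set.univ) := by
  rcases (measureReal_nonneg (μ := μ) (s := Set.univ)).eq_or_lt' with hμ | hμ
  · rw [measureReal_eq_zero_iff, Measure.measure_univ_eq_zero] at hμ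
    simp [hμ]
  have hs : 0 < √(μ.real Set.univ) := Real.sqrt_pos.mpr hμ
  -- AM-GM with the optimal weight `s = √(μ univ)`: `2 s ‖f‖ ≤ s² ‖f‖² + 1`.
  have hint : ∫ x, 2 * √(μ.real Set.univ) * ‖f x‖ ∂μ ≤
      ∫ x, (√(μ.real Set.univ) ^ 2 * ‖f x‖ ^ 2 + 1) ∂μ :=
    integral_mono_of_nonneg (.of_forall fun x => by positivity)
      ((hf.const_mul _).add (integrable_const 1))
      (.of_forall fun x => by nlinarith [sq_nonneg (√(μ.real Set.univ) * ‖f x‖ - 1)])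
  rw [integral_const_mul, integral_add (hf.const_mul _) (integrable_const 1), integral_const_mul,
    integral_const, smul_eq_mul, mul_one, Real.sq_sqrt measureReal_nonneg] at hint
  calc ‖∫ x, f x ∂μ‖ ≤ ∫ x, ‖f x‖ ∂μ := norm_integral_le_integral_norm f
    _ ≤ √(μ.real Set.univ) := by
      nlinarith [mul_le_mul_of_nonneg_left h1 hμ.le, Real.mul_self_sqrt hμ.le]

theorem toLp_integral {α ι : Type*} [MeasurableSpace α] [Fintype ι] {μ : Measure α}
    (f : α → ι → ℝ) : toLp 2 (∫ x, f x ∂μ) = ∫ x, toLp 2 (f x) ∂μ :=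
  ((PiLp.continuousLinearEquiv 2 ℝ _).symm.integral_comp_comm f).symm

variable {k : ℕ} {T : ℝ} {f : ℝ → Fin k → ℝ}

theorem Admissible.integrableOn_norm_sq (hf : Admissible T f) :
    IntegrableOn (fun t => ‖toLp 2 (f t)‖ ^ 2) (Set.Ioc 0 T) := by
  simpa [eNorm_eq_norm] using hf.2.1

theorem Admissible.integrableOn (hf : Admissible T f) : IntegrableOn f (Set.Ioc 0 T) := by
  have hL2 : MemLp (fun t => toLp 2 (f t)) 2 (volume.restrict (Set.Ioc 0 T)) :=
    (memLp_two_iff_integrable_sq_norm ((measurable_toLp 2 _).comp hf.1).aestronglyMeasurable).mpr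
      hf.integrableOn_norm_sq
  exact (PiLp.continuousLinearEquiv 2 ℝ _).symm.integrable_comp_iff.mp (hL2.integrable one_le_two)

theorem Admissible.eNorm_integral_le (hT : 0 ≤ T) (hf : Admissible T f) :
    eNorm (∫ t in Set.Ioc 0 T, f t) ≤ √T := by
  have := norm_integral_le_sqrt_measureReal_univ hf.integrableOn_norm_sq
    (by simpa [eNorm_eq_norm] using hf.2.2)
  rwa [measureReal_restrict_apply_univ, Real.volume_real_Ioc_of_le hT, sub_zero,
    ← toLp_integral, ← eNorm_eq_norm] at this

theorem admissible_const_inv_smul (hT : 0 < T) {c : Fin k → ℝ} (hc : eNorm c ≤ √T) :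
    Admissible T (fun _ => T⁻¹ • c) := by
  refine ⟨measurable_const, integrableOn_const measure_Ioc_lt_top.ne, ?_⟩
  rw [setIntegral_const, Real.volume_real_Ioc_of_le hT.le, sub_zero, smul_eq_mul, eNorm_eq_norm,
    toLp_smul, norm_smul, ← eNorm_eq_norm, Real.norm_of_nonneg (inv_nonneg.mpr hT.le)]
  field_simp
  exact (Real.le_sqrt (Real.sqrt_nonneg _) hT.le).mp hc

theorem integral_Ioc_const_inv_smul (hT : 0 < T) (c : Fin k → ℝ) :
    ∫ _ in Set.Ioc 0 T, T⁻¹ • c = c := by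
  rw [setIntegral_const, Real.volume_real_Ioc_of_le hT.le, sub_zero, smul_smul,
    mul_inv_cancel₀ hT.ne', one_smul]

end Signals

section Matrices

variable {n q p : ℕ}

theorem integral_mulVec_add_mulVec (B : Matrix (Fin n) (Fin q) ℝ) (C : Matrix (Fin n) (Fin p) ℝ)
    {s : Set ℝ} {u : ℝ → Fin q → ℝ} {w : ℝ → Fin p → ℝ} (hu : IntegrableOn u s)
    (hw : IntegrableOn w s) :
    ∫ t in s, (B *ᵥ u t + C *ᵥ w t) = B *ᵥ (∫ t in s, u t) + C *ᵥ ∫ t in s, w t := by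
  have hBu : IntegrableOn (fun t => B *ᵥ u t) s :=
    (mulVecLin B).toContinuousLinearMap.integrable_comp hu
  have hCw : IntegrableOn (fun t => C *ᵥ w t) s :=
    (mulVecLin C).toContinuousLinearMap.integrable_comp hw
  rw [integral_add hBu hCw]
  exact congrArg₂ (· + ·) ((mulVecLin B).toContinuousLinearMap.integral_comp_comm hu)
    ((mulVecLin C).toContinuousLinearMap.integral_comp_comm hw)

theorem resilientlyReachableAt_iff_forall_exists (B : Matrix (Fin n) (Fin q) ℝ)
    (C : Matrix (Fin n) (Fin p) ℝ) (x₀ xgoal : Fin n → ℝ) (ε : ℝ) {T : ℝ} (hT : 0 < T) :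
    ResilientlyReachableAt B C x₀ xgoal ε T ↔
      ∀ ξ : Fin p → ℝ, eNorm ξ ≤ √T →
        ∃ η : Fin q → ℝ, eNorm η ≤ √T ∧ eNorm (x₀ - xgoal + C *ᵥ ξ + B *ᵥ η) ≤ ε := by
  have hend : ∀ {u w}, Admissible T u → Admissible T w →
      x₀ + (∫ t in Set.Ioc 0 T, (B *ᵥ u t + C *ᵥ w t)) - xgoal =
        x₀ - xgoal + C *ᵥ (∫ t in Set.Ioc 0 T, w t) + B *ᵥ ∫ t in Set.Ioc 0 T, u t :=
    fun hu hw => by rw [integral_mulVec_add_mulVec B C hu.integrableOn hw.integrableOn]; abel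
  constructor
  · intro H ξ hξ
    obtain ⟨u, hu, hreach⟩ := H _ (admissible_const_inv_smul hT hξ)
    refine ⟨_, hu.eNorm_integral_le hT.le, ?_⟩
    rwa [hend hu (admissible_const_inv_smul hT hξ), integral_Ioc_const_inv_smul hT] at hreach
  · intro H w hw
    obtain ⟨η, hη, hreach⟩ := H _ (hw.eNorm_integral_le hT.le)
    refine ⟨_, admissible_const_inv_smul hT hη, ?_⟩
    rwa [hend (admissible_const_inv_smul hT hη) hw, integral_Ioc_const_inv_smul hT]

theorem forall_exists_eNorm_add_mulVec_le_iff (B : Matrix (Fin n) (Fin q) ℝ)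
    (C : Matrix (Fin n) (Fin p) ℝ) (v : Fin n → ℝ) {r ε : ℝ} (hr : 0 ≤ r) (hε : 0 ≤ ε) :
    (∀ ξ : Fin p → ℝ, eNorm ξ ≤ r →
        ∃ η : Fin q → ℝ, eNorm η ≤ r ∧ eNorm (v + C *ᵥ ξ + B *ᵥ η) ≤ ε) ↔
      ∀ h : Fin n → ℝ, eNorm h = 1 →
        h ⬝ᵥ v - r * eNorm (Bᵀ *ᵥ h) + r * eNorm (Cᵀ *ᵥ h) ≤ ε := by
  have := forall_exists_mem_closedBall_norm_add_add_le_iff (toEuclideanLin B) (toEuclideanLin C)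
    (toLp 2 v) hr hε
  rw [← toEuclideanLin_conjTranspose_eq_adjoint, ← toEuclideanLin_conjTranspose_eq_adjoint,
    conjTranspose_eq_transpose_of_trivial, conjTranspose_eq_transpose_of_trivial] at this
  simp only [(WithLp.equiv 2 (Fin p → ℝ)).forall_congr_left,
    (WithLp.equiv 2 (Fin q → ℝ)).exists_congr_left,
    (WithLp.equiv 2 (Fin n → ℝ)).forall_congr_left] at this
  simpa [eNorm_eq_norm, EuclideanSpace.inner_toLp_toLp, dotProduct_comm] using this

end Matrices

theorem resiliently_reachable_at_iff {n m p : ℕ} (B : Matrix (Fin n) (Fin (m - p)) ℝ)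
    (C : Matrix (Fin n) (Fin p) ℝ) (x₀ xgoal : Fin n → ℝ) (ε T : ℝ)
    (hε : 0 ≤ ε) (hT : 0 < T) :
    ResilientlyReachableAt B C x₀ xgoal ε T ↔
      ∀ h : Fin n → ℝ, eNorm h = 1 →
        h ⬝ᵥ (x₀ - xgoal) - Real.sqrt T * eNorm (Bᵀ.mulVec h)
          + Real.sqrt T * eNorm (Cᵀ.mulVec h) ≤ ε := by
  rw [resilientlyReachableAt_iff_forall_exists B C x₀ xgoal ε hT]
  exact forall_exists_eNorm_add_mulVec_le_iff B C _ (Real.sqrt_nonneg T) hε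
end

section
/- Let B ∈ ℝ^{n×(m−p)}, C ∈ ℝ^{n×p}, x₀, x_goal ∈ ℝⁿ, ε ≥ 0, and define g(h) := ‖Cᵀh‖ − ‖Bᵀh‖ for unit vectors h ∈ ℝⁿ. If the maximum of g over the unit sphere is strictly positive, then there exists a time t_lim ≥ 0 such that for all t > t_lim the target ball G = {x ∈ ℝⁿ : ‖x − x_goal‖ ≤ ε} is not resiliently reachable at time t from x₀. -/
open MeasureTheory Matrix

/-!
Fix a unit vector `h` with `g(h) > 0` and let the disturbance be the constant
`w ≡ Cᵀh / (‖Cᵀh‖ √T)`, which spends the whole `L²` budget. For every admissible control `u`,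
`⟨h, x(T) - x₀⟩ = √T ‖Cᵀh‖ + ∫ ⟨Bᵀh, u⟩ ≥ √T (‖Cᵀh‖ - ‖Bᵀh‖)`, by Cauchy–Schwarz in `L²(0,T)`.
Reaching the ball forces `⟨h, x(T) - x₀⟩ ≤ ε + ‖x₀ - x_goal‖`, so this fails as soon as
`√T g(h) > ε + ‖x₀ - x_goal‖`.
-/

open Set

section EuclideanNorm

variable {k : ℕ}

lemma eNorm_nonneg (v : Fin k → ℝ) : 0 ≤ eNorm v := Real.sqrt_nonneg _

lemma sq_eNorm (v : Fin k → ℝ) : eNorm v ^ 2 = v ⬝ᵥ v := by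
  rw [eNorm, Real.sq_sqrt (by positivity)]
  simp only [dotProduct, sq]

lemma eNorm_smul (r : ℝ) (v : Fin k → ℝ) : eNorm (r • v) = |r| * eNorm v := by
  simp only [eNorm, Pi.smul_apply, smul_eq_mul, mul_pow, ← Finset.mul_sum]
  rw [Real.sqrt_mul (sq_nonneg r), Real.sqrt_sq_eq_abs]

lemma continuous_eNorm : Continuous (eNorm : (Fin k → ℝ) → ℝ) := by
  unfold eNorm; fun_prop

lemma norm_le_eNorm (v : Fin k → ℝ) : ‖v‖ ≤ eNorm v :=
  (pi_norm_le_iff_of_nonneg (eNorm_nonneg v)).2 fun i => by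
    rw [Real.norm_eq_abs, ← Real.sqrt_sq_eq_abs]
    exact Real.sqrt_le_sqrt (Finset.single_le_sum (fun j _ => sq_nonneg (v j)) (Finset.mem_univ i))

lemma abs_dotProduct_le (a b : Fin k → ℝ) : |a ⬝ᵥ b| ≤ eNorm a * eNorm b := by
  have hneg := Real.sum_mul_le_sqrt_mul_sqrt Finset.univ (-a) b
  simp only [Pi.neg_apply, neg_mul, Finset.sum_neg_distrib, neg_sq] at hneg
  rw [abs_le]
  exact ⟨by simp only [dotProduct, eNorm]; linarith,
    Real.sum_mul_le_sqrt_mul_sqrt Finset.univ a b⟩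

end EuclideanNorm

lemma two_mul_le_mul_sq_add_inv {a : ℝ} (ha : 0 < a) (x : ℝ) : 2 * x ≤ a * x ^ 2 + a⁻¹ := by
  have hsq : a * x ^ 2 + a⁻¹ - 2 * x = (a * x - 1) ^ 2 / a := by
    field_simp
    ring
  linarith [hsq ▸ (by positivity : 0 ≤ (a * x - 1) ^ 2 / a)]

section Integral

variable {ι X : Type*} [Fintype ι] [MeasurableSpace X] {μ : Measure X} {f : X → ι → ℝ}

lemma MeasureTheory.Integrable.matrix_mulVec {κ : Type*} [Fintype κ] (M : Matrix κ ι ℝ)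
    (hf : Integrable f μ) :
    Integrable (fun x => M *ᵥ f x) μ :=
  (LinearMap.toContinuousLinearMap M.mulVecLin).integrable_comp hf

lemma MeasureTheory.Integrable.dotProduct_const (a : ι → ℝ) (hf : Integrable f μ) :
    Integrable (fun x => a ⬝ᵥ f x) μ :=
  (LinearMap.toContinuousLinearMap (dotProductBilin ℝ ℝ a)).integrable_comp hf

lemma dotProduct_integral (a : ι → ℝ) (hf : Integrable f μ) :
    a ⬝ᵥ ∫ x, f x ∂μ = ∫ x, a ⬝ᵥ f x ∂μ :=
  (ContinuousLinearMap.integral_comp_comm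
    (LinearMap.toContinuousLinearMap (dotProductBilin ℝ ℝ a)) hf).symm

end Integral

namespace Admissible

variable {k : ℕ} {T : ℝ} {f : ℝ → Fin k → ℝ}

lemma const {v : Fin k → ℝ} (hT : 0 ≤ T) (hv : T * eNorm v ^ 2 ≤ 1) :
    Admissible T (fun _ => v) :=
  ⟨measurable_const, integrableOn_const measure_Ioc_lt_top.ne, by
    rwa [setIntegral_const, Real.volume_real_Ioc_of_le hT, sub_zero, smul_eq_mul]⟩

lemma integrableOn_eNorm (hf : Admissible T f) :
    IntegrableOn (fun t => eNorm (f t)) (Ioc 0 T) := by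
  have hone : IntegrableOn (fun _ => (1 : ℝ)) (Ioc 0 T) :=
    integrableOn_const measure_Ioc_lt_top.ne
  refine Integrable.mono' ((hf.2.1.add hone).div_const 2)
    (continuous_eNorm.measurable.comp hf.1).aestronglyMeasurable (ae_of_all _ fun t => ?_)
  have := two_mul_le_mul_sq_add_inv one_pos (eNorm (f t))
  rw [Real.norm_eq_abs, abs_of_nonneg (eNorm_nonneg _), Pi.add_apply]
  linarith

lemma integrableOn_s2 (hf : Admissible T f) : IntegrableOn f (Ioc 0 T) :=
  hf.integrableOn_eNorm.mono' hf.1.aestronglyMeasurable (ae_of_all _ fun t => norm_le_eNorm (f t))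

/-- Cauchy–Schwarz in `L²(0,T)`, obtained by integrating `2‖f‖ ≤ √T ‖f‖² + 1/√T`. -/
lemma integral_eNorm_le (hf : Admissible T f) (hT : 0 < T) :
    ∫ t in Ioc 0 T, eNorm (f t) ≤ √T := by
  have hs : 0 < √T := Real.sqrt_pos.2 hT
  set s := √T
  have hamgm : ∫ t in Ioc 0 T, 2 * eNorm (f t) ≤ ∫ t in Ioc 0 T, (s * eNorm (f t) ^ 2 + s⁻¹) :=
    integral_mono (hf.integrableOn_eNorm.const_mul 2)
      ((hf.2.1.const_mul s).add (integrableOn_const measure_Ioc_lt_top.ne))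
      fun t => two_mul_le_mul_sq_add_inv hs _
  rw [integral_const_mul, integral_add (hf.2.1.const_mul s)
    (integrableOn_const measure_Ioc_lt_top.ne), integral_const_mul, setIntegral_const,
    Real.volume_real_Ioc_of_le hT.le, sub_zero, smul_eq_mul] at hamgm
  have hTs : T * s⁻¹ = s := by
    rw [← div_eq_mul_inv, div_eq_iff hs.ne', Real.mul_self_sqrt hT.le]
  nlinarith [hf.2.2]

lemma abs_integral_dotProduct_le (hf : Admissible T f) (hT : 0 < T) (a : Fin k → ℝ) :
    |∫ t in Ioc 0 T, a ⬝ᵥ f t| ≤ eNorm a * √T :=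
  calc |∫ t in Ioc 0 T, a ⬝ᵥ f t|
      ≤ ∫ t in Ioc 0 T, eNorm a * eNorm (f t) := by
        rw [← Real.norm_eq_abs]
        exact norm_integral_le_of_norm_le (hf.integrableOn_eNorm.const_mul _)
          (ae_of_all _ fun t => abs_dotProduct_le a (f t))
    _ ≤ eNorm a * √T := by
        rw [integral_const_mul]
        exact mul_le_mul_of_nonneg_left (hf.integral_eNorm_le hT) (eNorm_nonneg a)

end Admissible

section Disturbance

variable {n q p : ℕ} {T : ℝ}

/-- Held constant on `[0, T]`, this disturbance pushes the state along `C Cᵀ h` and spends the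
whole `L²` budget; it is `0` when `Cᵀ h = 0`. -/
noncomputable def worstDisturbance (C : Matrix (Fin n) (Fin p) ℝ) (h : Fin n → ℝ) (T : ℝ) :
    Fin p → ℝ :=
  (eNorm (Cᵀ *ᵥ h) * √T)⁻¹ • (Cᵀ *ᵥ h)

variable (B : Matrix (Fin n) (Fin q) ℝ) (C : Matrix (Fin n) (Fin p) ℝ) (h : Fin n → ℝ)

lemma admissible_worstDisturbance (hT : 0 ≤ T) :
    Admissible T (fun _ => worstDisturbance C h T) := by
  refine Admissible.const hT ?_
  have hc := eNorm_nonneg (Cᵀ *ᵥ h)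
  rw [worstDisturbance, eNorm_smul, abs_of_nonneg (by positivity), mul_pow, inv_pow, mul_pow,
    Real.sq_sqrt hT]
  calc _ = (eNorm (Cᵀ *ᵥ h) ^ 2 * T) / (eNorm (Cᵀ *ᵥ h) ^ 2 * T) := by ring
    _ ≤ 1 := div_self_le_one _

lemma dotProduct_worstDisturbance (hT : 0 < T) :
    (Cᵀ *ᵥ h) ⬝ᵥ worstDisturbance C h T = eNorm (Cᵀ *ᵥ h) / √T := by
  rw [worstDisturbance, dotProduct_smul, smul_eq_mul, ← sq_eNorm]
  have := Real.sqrt_pos.2 hT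
  rcases eq_or_ne (eNorm (Cᵀ *ᵥ h)) 0 with hc | hc
  · simp [hc]
  · field_simp

lemma sqrt_mul_sub_le_dotProduct_integral {u : ℝ → Fin q → ℝ} (hu : Admissible T u)
    (hT : 0 < T) :
    √T * (eNorm (Cᵀ *ᵥ h) - eNorm (Bᵀ *ᵥ h)) ≤
      h ⬝ᵥ ∫ t in Ioc 0 T, (B *ᵥ u t + C *ᵥ worstDisturbance C h T) := by
  have hdot (t : ℝ) : h ⬝ᵥ (B *ᵥ u t + C *ᵥ worstDisturbance C h T) =
      (Bᵀ *ᵥ h) ⬝ᵥ u t + eNorm (Cᵀ *ᵥ h) / √T := by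
    rw [dotProduct_add, dotProduct_mulVec, dotProduct_mulVec, ← mulVec_transpose,
      ← mulVec_transpose, dotProduct_worstDisturbance C h hT]
  have hint : IntegrableOn (fun t => B *ᵥ u t + C *ᵥ worstDisturbance C h T) (Ioc 0 T) :=
    (hu.integrableOn_s2.matrix_mulVec B).add (integrableOn_const measure_Ioc_lt_top.ne)
  have hTc : T * (eNorm (Cᵀ *ᵥ h) / √T) = √T * eNorm (Cᵀ *ᵥ h) := by
    nth_rewrite 1 [← Real.mul_self_sqrt hT.le]
    field_simp
  rw [dotProduct_integral h hint, funext hdot,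
    integral_add (hu.integrableOn_s2.dotProduct_const _) (integrableOn_const measure_Ioc_lt_top.ne),
    setIntegral_const, Real.volume_real_Ioc_of_le hT.le, sub_zero, smul_eq_mul, hTc]
  linarith [(abs_le.1 (hu.abs_integral_dotProduct_le hT (Bᵀ *ᵥ h))).1]

variable {B C h} in
lemma ResilientlyReachableAt.sqrt_mul_le {x₀ xgoal : Fin n → ℝ} {ε : ℝ}
    (hR : ResilientlyReachableAt B C x₀ xgoal ε T) (hT : 0 < T) (hh : eNorm h = 1) :
    √T * (eNorm (Cᵀ *ᵥ h) - eNorm (Bᵀ *ᵥ h)) ≤ ε + eNorm (x₀ - xgoal) := by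
  obtain ⟨u, hu, hreach⟩ := hR _ (admissible_worstDisturbance C h hT.le)
  set I := ∫ t in Ioc 0 T, (B *ᵥ u t + C *ᵥ worstDisturbance C h T)
  have hend : h ⬝ᵥ (x₀ + I - xgoal) ≤ ε :=
    (le_abs_self _).trans ((abs_dotProduct_le h _).trans (by rwa [hh, one_mul]))
  have hstart : -eNorm (x₀ - xgoal) ≤ h ⬝ᵥ (x₀ - xgoal) :=
    neg_le_of_abs_le ((abs_dotProduct_le h _).trans_eq (by rw [hh, one_mul]))
  have hsplit : h ⬝ᵥ I = h ⬝ᵥ (x₀ + I - xgoal) - h ⬝ᵥ (x₀ - xgoal) := by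
    simp only [dotProduct_sub, dotProduct_add]; ring
  linarith [sqrt_mul_sub_le_dotProduct_integral B C h hu hT]

end Disturbance

theorem not_resiliently_reachable_of_g_pos_general {n m p : ℕ} (B : Matrix (Fin n) (Fin (m - p)) ℝ)
    (C : Matrix (Fin n) (Fin p) ℝ) (x₀ xgoal : Fin n → ℝ) (ε : ℝ)
    (hg : ∃ h : Fin n → ℝ, eNorm h = 1 ∧
      0 < eNorm (Cᵀ.mulVec h) - eNorm (Bᵀ.mulVec h)) :
    ∃ tlim : ℝ, 0 ≤ tlim ∧ ∀ t : ℝ, tlim < t →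
      ¬ ResilientlyReachableAt B C x₀ xgoal ε t := by
  obtain ⟨h, hh, hgpos⟩ := hg
  refine ⟨((ε + eNorm (x₀ - xgoal)) / (eNorm (Cᵀ *ᵥ h) - eNorm (Bᵀ *ᵥ h))) ^ 2, sq_nonneg _,
    fun T hT hR => ?_⟩
  have hT0 : 0 < T := (sq_nonneg _).trans_lt hT
  have hlt := (div_lt_iff₀ hgpos).1 (Real.lt_sqrt_of_sq_lt hT)
  linarith [hR.sqrt_mul_le hT0 hh]

theorem not_resiliently_reachable_of_g_pos {n m p : ℕ} (B : Matrix (Fin n) (Fin (m - p)) ℝ)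
    (C : Matrix (Fin n) (Fin p) ℝ) (x₀ xgoal : Fin n → ℝ) (ε : ℝ) (hε : 0 ≤ ε)
    (hg : ∃ h : Fin n → ℝ, eNorm h = 1 ∧
      0 < eNorm (Cᵀ.mulVec h) - eNorm (Bᵀ.mulVec h)) :
    ∃ tlim : ℝ, 0 ≤ tlim ∧ ∀ t : ℝ, tlim < t →
      ¬ ResilientlyReachableAt B C x₀ xgoal ε t :=
  not_resiliently_reachable_of_g_pos_general B C x₀ xgoal ε hg
end

section
/- Let B̄ ∈ ℝ^{n×m} with m ≤ n. Then for every column C of B̄, with B denoting the matrix of the remaining m−1 columns, the matrix F = BBᵀ − CCᵀ is not positive definite. (Consequently, a 1-resilient driftless system must be overactuated, i.e., must satisfy m > n.) -/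
/-!
Since `B` has fewer columns than rows, `Bᵀ` has a nonzero kernel vector `x`. On `x` the quadratic
form of `BBᵀ` vanishes, so that of `BBᵀ - CCᵀ` equals `-(C ⬝ᵥ x)² ≤ 0`.
-/

open Matrix

theorem Matrix.exists_mulVec_eq_zero_of_card_lt {m n K : Type*} [Fintype m] [Fintype n] [Field K]
    (A : Matrix m n K) (h : Fintype.card m < Fintype.card n) : ∃ v ≠ 0, A *ᵥ v = 0 := by
  have hker : LinearMap.ker A.mulVecLin ≠ ⊥ :=
    LinearMap.ker_ne_bot_of_finrank_lt (by simpa using h)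
  obtain ⟨v, hv, hv0⟩ := Submodule.exists_mem_ne_zero_of_ne_bot hker
  exact ⟨v, hv0, hv⟩

theorem Matrix.not_posDef_sub_of_mulVec_eq_zero {n R : Type*} [Fintype n] [Ring R]
    [PartialOrder R] [StarRing R] [IsOrderedAddMonoid R] {M N : Matrix n n R}
    (hN : N.PosSemidef) {x : n → R} (hx : x ≠ 0) (hMx : M *ᵥ x = 0) : ¬ (M - N).PosDef := by
  intro hMN
  have hpos := hMN.dotProduct_mulVec_pos hx
  rw [sub_mulVec, hMx, zero_sub, dotProduct_neg, neg_pos] at hpos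
  exact (hN.dotProduct_mulVec_nonneg x).not_gt hpos

theorem not_posDef_of_not_overactuated {n m : ℕ} (Bbar : Matrix (Fin n) (Fin (m + 1)) ℝ)
    (hmn : m + 1 ≤ n) (j : Fin (m + 1)) :
    ¬ (Bbar.submatrix id j.succAbove * (Bbar.submatrix id j.succAbove)ᵀ -
        vecMulVec (fun i => Bbar i j) (fun i => Bbar i j)).PosDef := by
  set B := Bbar.submatrix id j.succAbove
  obtain ⟨x, hx, hBx⟩ := Bᵀ.exists_mulVec_eq_zero_of_card_lt (by simpa using hmn)
  have hCC := posSemidef_vecMulVec_self_star fun i => Bbar i j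
  rw [star_trivial] at hCC
  exact not_posDef_sub_of_mulVec_eq_zero hCC hx (by rw [← mulVec_mulVec, hBx, mulVec_zero])
end

section
/- Let B̄ ∈ ℝ^{n×m} with columns C₁, …, C_m. If for every j ∈ {1,…,m} the matrix F_j := B̄B̄ᵀ − 2CⱼCⱼᵀ (equal to BBᵀ − CⱼCⱼᵀ where B is B̄ with column j removed) is positive definite, then m ≥ 2n + 1. (In other words, a 1-resilient control matrix in ℝⁿ must have at least 2n+1 columns.) -/
/-!
Put `M = B̄B̄ᵀ` and let `gⱼ = Cⱼᵀ M⁻¹ Cⱼ` be the leverage scores of the columns. Their sum is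
`tr (B̄ᵀ M⁻¹ B̄) = tr (M⁻¹ B̄B̄ᵀ) = n`. Evaluating the quadratic form of `M - 2CⱼCⱼᵀ ≻ 0` at
`x = M⁻¹ Cⱼ` gives `gⱼ - 2gⱼ² > 0`, so every `gⱼ < 1/2`, and summing, `n < (m + 1) / 2`.
-/

open Matrix

section

variable {ι : Type*} [Fintype ι]

lemma dotProduct_sub_smul_vecMulVec_mulVec {R : Type*} [CommRing R] (M : Matrix ι ι R) (t : R)
    (c x : ι → R) :
    x ⬝ᵥ (M - t • vecMulVec c c) *ᵥ x = x ⬝ᵥ M *ᵥ x - t * (c ⬝ᵥ x) ^ 2 := by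
  simp only [sub_mulVec, smul_mulVec, dotProduct_sub, dotProduct_smul, vecMulVec_mulVec,
    op_smul_eq_smul, smul_eq_mul, dotProduct_comm x c]
  ring

lemma posDef_of_posDef_sub_smul_vecMulVec {M : Matrix ι ι ℝ} {t : ℝ} (ht : 0 ≤ t)
    {c : ι → ℝ} (h : (M - t • vecMulVec c c).PosDef) : M.PosDef := by
  have hc : (t • vecMulVec c c).PosSemidef := (posSemidef_vecMulVec_self_star c).smul ht
  simpa using h.add_posSemidef hc

lemma mul_dotProduct_inv_mulVec_lt_one [DecidableEq ι] {M : Matrix ι ι ℝ} {t : ℝ} (ht : 0 ≤ t)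
    {c : ι → ℝ} (h : (M - t • vecMulVec c c).PosDef) : t * (c ⬝ᵥ M⁻¹ *ᵥ c) < 1 := by
  set x := M⁻¹ *ᵥ c
  have hMx : M *ᵥ x = c := by
    have hdet := (isUnit_iff_isUnit_det M).mp (posDef_of_posDef_sub_smul_vecMulVec ht h).isUnit
    rw [mulVec_mulVec, mul_nonsing_inv M hdet, one_mulVec]
  by_cases hx : x = 0
  · simp [hx]
  have hquad := h.dotProduct_mulVec_pos hx
  rw [star_trivial, dotProduct_sub_smul_vecMulVec_mulVec, hMx, dotProduct_comm x c] at hquad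
  rcases le_or_gt (c ⬝ᵥ x) 0 with hg_nonpos | hg_pos
  · nlinarith
  · nlinarith

lemma sum_dotProduct_mul_transpose_inv_mulVec {K κ : Type*} [Field K] [Fintype κ]
    [DecidableEq ι] (B : Matrix ι κ K) (hB : IsUnit (B * Bᵀ)) :
    ∑ j, Bᵀ j ⬝ᵥ (B * Bᵀ)⁻¹ *ᵥ Bᵀ j = Fintype.card ι := by
  have htrace : ∑ j, Bᵀ j ⬝ᵥ (B * Bᵀ)⁻¹ *ᵥ Bᵀ j = (Bᵀ * (B * Bᵀ)⁻¹ * B).trace := by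
    simp only [trace, diag, mul_apply, transpose_apply, dotProduct, mulVec, Finset.mul_sum,
      Finset.sum_mul, mul_assoc]
    exact Finset.sum_congr rfl fun _ _ => Finset.sum_comm
  rw [htrace, trace_mul_cycle, mul_nonsing_inv _ ((isUnit_iff_isUnit_det _).mp hB), trace_one]

end

theorem one_resilient_min_size {n m : ℕ} (Bbar : Matrix (Fin n) (Fin (m + 1)) ℝ)
    (hres : ∀ j : Fin (m + 1),
      (Bbar * Bbarᵀ -
        (2 : ℝ) • vecMulVec (fun i => Bbar i j) (fun i => Bbar i j)).PosDef) :
    2 * n + 1 ≤ m + 1 := by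
  have hres' (j : Fin (m + 1)) :
      (Bbar * Bbarᵀ - (2 : ℝ) • vecMulVec (Bbarᵀ j) (Bbarᵀ j)).PosDef := hres j
  have hM : (Bbar * Bbarᵀ).PosDef := posDef_of_posDef_sub_smul_vecMulVec zero_le_two (hres' 0)
  have hlev (j : Fin (m + 1)) : Bbarᵀ j ⬝ᵥ (Bbar * Bbarᵀ)⁻¹ *ᵥ Bbarᵀ j < 1 / 2 := by
    linarith [mul_dotProduct_inv_mulVec_lt_one zero_le_two (hres' j)]
  have hn : (n : ℝ) < (m + 1) / 2 :=
    calc (n : ℝ) = ∑ j, Bbarᵀ j ⬝ᵥ (Bbar * Bbarᵀ)⁻¹ *ᵥ Bbarᵀ j := by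
          rw [sum_dotProduct_mul_transpose_inv_mulVec _ hM.isUnit, Fintype.card_fin]
      _ < ∑ _j : Fin (m + 1), (1 / 2 : ℝ) :=
          Finset.sum_lt_sum_of_nonempty Finset.univ_nonempty fun j _ => hlev j
      _ = (m + 1) / 2 := by
          simp only [Finset.sum_const, Finset.card_univ, Fintype.card_fin, nsmul_eq_mul]
          push_cast
          ring
  have hcast : (2 * n : ℝ) < m + 1 := by linarith
  exact_mod_cast hcast
end

section
/- Let n ∈ ℕ, n ≥ 1, and let B̄ = [I_n I_n D] ∈ ℝ^{n×(2n+1)} where D = (1/√n)·(1, …, 1)ᵀ ∈ ℝⁿ. Then for every j ∈ {1,…,2n+1}, letting C ∈ ℝⁿ be the j-th column of B̄ and B ∈ ℝ^{n×2n} the remaining columns, one has ‖Cᵀh‖ < ‖Bᵀh‖ for every unit vector h ∈ ℝⁿ (equivalently, BBᵀ − CCᵀ is positive definite); hence B̄ is 1-resilient. -/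
/-!
Since `B̄ B̄ᵀ = 2 I + D Dᵀ`, deleting the column `C` leaves `B Bᵀ - C Cᵀ = 2 I + D Dᵀ - 2 C Cᵀ`.
If `C = e_k`, the quadratic form is `2 (‖x‖² - x_k²) + (D ⬝ x)²`; it can only vanish when `x` is
supported at `k` and orthogonal to `D`, and as `D_k ≠ 0` that forces `x = 0`. If `C = D`, it is
`2 ‖x‖² - (D ⬝ x)² ≥ ‖x‖²` by Cauchy–Schwarz, because `‖D‖ ≤ 1`. The norm inequality is this
positivity read off at `h`, since `h ⬝ (B Bᵀ h) = ‖Bᵀ h‖²`.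
-/

open Matrix

/-- The `n × (2n+1)` control matrix `[Iₙ Iₙ D]` with `D = (1/√n)(1,…,1)ᵀ`. -/
noncomputable def BbarTwo (n : ℕ) : Matrix (Fin n) (Fin (2 * n + 1)) ℝ :=
  Matrix.of fun i j =>
    if j.val < n then (if i.val = j.val then 1 else 0)
    else if j.val < 2 * n then (if i.val = j.val - n then 1 else 0)
    else 1 / Real.sqrt n

theorem eNorm_eq_sqrt_dotProduct_self {k : ℕ} (v : Fin k → ℝ) : eNorm v = √(v ⬝ᵥ v) := by
  simp only [eNorm, dotProduct, sq]

theorem Fin.sum_univ_two_mul_add_one {M : Type*} [AddCommMonoid M] {n : ℕ}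
    (f : Fin (2 * n + 1) → M) :
    ∑ j, f j =
      ∑ k : Fin n, f ⟨k, by omega⟩ + ∑ k : Fin n, f ⟨n + k, by omega⟩ + f (Fin.last _) := by
  rw [Fin.sum_univ_castSucc, ← (finCongr (two_mul n)).symm.sum_comp, Fin.sum_univ_add]
  rfl

namespace Matrix

theorem submatrix_succAbove_mul_transpose {ι α : Type*} [Ring α] {m : ℕ}
    (M : Matrix ι (Fin (m + 1)) α) (j : Fin (m + 1)) :
    M.submatrix id j.succAbove * (M.submatrix id j.succAbove)ᵀ =
      M * Mᵀ - vecMulVec (fun i => M i j) (fun i => M i j) := by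
  ext i i'
  simp [mul_apply, Fin.sum_univ_succAbove _ j, vecMulVec_apply]

variable {ι : Type*} [Fintype ι]

theorem dotProduct_self_pos {x : ι → ℝ} (hx : x ≠ 0) : 0 < x ⬝ᵥ x := by
  simpa using dotProduct_star_self_pos_iff.2 hx

theorem sq_dotProduct_le_mul (d x : ι → ℝ) : (d ⬝ᵥ x) ^ 2 ≤ (d ⬝ᵥ d) * (x ⬝ᵥ x) := by
  simpa [dotProduct, sq] using Finset.sum_mul_sq_le_sq_mul_sq Finset.univ d x

theorem dotProduct_vecMulVec_self_mulVec (d x : ι → ℝ) :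
    x ⬝ᵥ (vecMulVec d d *ᵥ x) = (d ⬝ᵥ x) ^ 2 := by
  rw [vecMulVec_mulVec]
  simp [dotProduct_comm x d, sq]

theorem abs_dotProduct_lt_eNorm_of_posDef {n m : ℕ} {B : Matrix (Fin n) (Fin m) ℝ}
    {c : Fin n → ℝ} (hB : (B * Bᵀ - vecMulVec c c).PosDef) {h : Fin n → ℝ} (hh : h ≠ 0) :
    |c ⬝ᵥ h| < eNorm (Bᵀ *ᵥ h) := by
  have hpos := hB.dotProduct_mulVec_pos hh
  rw [star_trivial, sub_mulVec, dotProduct_sub, dotProduct_vecMulVec_self_mulVec,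
    ← mulVec_mulVec, dotProduct_mulVec, ← mulVec_transpose, sub_pos] at hpos
  rw [eNorm_eq_sqrt_dotProduct_self, ← Real.sqrt_sq_eq_abs]
  exact Real.sqrt_lt_sqrt (sq_nonneg _) hpos

theorem posDef_smul_one_add_vecMulVec_sub_smul_vecMulVec [DecidableEq ι] {a b : ℝ}
    {c d : ι → ℝ} (h : ∀ x ≠ 0, b * (c ⬝ᵥ x) ^ 2 < a * (x ⬝ᵥ x) + (d ⬝ᵥ x) ^ 2) :
    (a • 1 + vecMulVec d d - b • vecMulVec c c).PosDef := by
  refine posDef_iff_dotProduct_mulVec.2 ⟨?_, fun x hx => ?_⟩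
  · ext i i'
    simp [vecMulVec_apply, one_apply, eq_comm, mul_comm]
  · simp only [star_trivial, sub_mulVec, add_mulVec, smul_mulVec, one_mulVec, dotProduct_sub,
      dotProduct_add, dotProduct_smul, dotProduct_vecMulVec_self_mulVec, smul_eq_mul]
    linarith [h x hx]

theorem mul_sq_apply_lt_mul_dotProduct_self_add_sq [DecidableEq ι] {a : ℝ} (ha : 0 < a)
    {d x : ι → ℝ} {k : ι} (hdk : d k ≠ 0) (hx : x ≠ 0) :
    a * x k ^ 2 < a * (x ⬝ᵥ x) + (d ⬝ᵥ x) ^ 2 := by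
  have hsplit : x ⬝ᵥ x = x k ^ 2 + ∑ i ∈ Finset.univ.erase k, x i ^ 2 := by
    rw [dotProduct, ← Finset.add_sum_erase _ _ (Finset.mem_univ k)]
    simp only [sq]
  have hrest_nonneg : 0 ≤ ∑ i ∈ Finset.univ.erase k, x i ^ 2 :=
    Finset.sum_nonneg fun i _ => sq_nonneg (x i)
  by_contra! hle
  have hrest : ∑ i ∈ Finset.univ.erase k, x i ^ 2 = 0 := by
    nlinarith [sq_nonneg (d ⬝ᵥ x)]
  have hx_single : x = Pi.single k (x k) := by
    ext i
    rcases eq_or_ne i k with rfl | hik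
    · simp
    · have := (Finset.sum_eq_zero_iff_of_nonneg fun i _ => sq_nonneg (x i)).1 hrest i
        (Finset.mem_erase.2 ⟨hik, Finset.mem_univ i⟩)
      simpa [hik] using this
  have hdx : d ⬝ᵥ x = 0 := by nlinarith [sq_nonneg (d ⬝ᵥ x)]
  rw [hx_single, dotProduct_single, mul_eq_zero] at hdx
  exact hx (hx_single.trans (by simp [hdx.resolve_left hdk]))

end Matrix

section BbarTwo

variable {n : ℕ}

theorem BbarTwo_apply_left (i k : Fin n) :
    BbarTwo n i ⟨k, by omega⟩ = if i = k then 1 else 0 := by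
  simp [BbarTwo, Fin.ext_iff]

theorem BbarTwo_apply_right (i k : Fin n) :
    BbarTwo n i ⟨n + k, by omega⟩ = if i = k then 1 else 0 := by
  simp [BbarTwo, Fin.ext_iff, show n + (k : ℕ) < 2 * n by omega]

theorem BbarTwo_apply_last (i : Fin n) : BbarTwo n i (Fin.last _) = 1 / √n := by
  simp [BbarTwo, show ¬ 2 * n < n by omega]

theorem const_inv_sqrt_dotProduct_self_le_one (n : ℕ) :
    (fun _ : Fin n => 1 / √n) ⬝ᵥ (fun _ => 1 / √n) ≤ 1 := by
  rcases n.eq_zero_or_pos with rfl | hn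
  · simp
  · simp [dotProduct, ← sq, Real.sq_sqrt, hn.ne']

theorem BbarTwo_mul_transpose :
    BbarTwo n * (BbarTwo n)ᵀ =
      (2 : ℝ) • 1 + vecMulVec (fun _ => 1 / √n) (fun _ => 1 / √n) := by
  ext i i'
  simp [mul_apply, Fin.sum_univ_two_mul_add_one, BbarTwo_apply_left, BbarTwo_apply_right,
    BbarTwo_apply_last, one_apply, vecMulVec_apply]
  split_ifs <;> norm_num

theorem BbarTwo_column_eq_single_or_const (j : Fin (2 * n + 1)) :
    (∃ k, (fun i => BbarTwo n i j) = Pi.single k 1) ∨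
      (fun i => BbarTwo n i j) = fun _ => 1 / √n := by
  obtain ⟨j, hj⟩ := j
  by_cases hjl : j < n
  · exact .inl ⟨⟨j, hjl⟩, funext fun i => by
      simp [BbarTwo_apply_left i ⟨j, hjl⟩, Pi.single_apply]⟩
  by_cases hjr : j < 2 * n
  · obtain ⟨k, rfl⟩ := Nat.exists_eq_add_of_le (not_lt.1 hjl)
    exact .inl ⟨⟨k, by omega⟩, funext fun i => by
      simp [BbarTwo_apply_right i ⟨k, by omega⟩, Pi.single_apply]⟩
  · obtain rfl : j = 2 * n := by omega
    exact .inr (funext BbarTwo_apply_last)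

theorem posDef_BbarTwo_submatrix_mul_transpose_sub_vecMulVec (j : Fin (2 * n + 1)) :
    ((BbarTwo n).submatrix id j.succAbove * ((BbarTwo n).submatrix id j.succAbove)ᵀ -
      vecMulVec (fun i => BbarTwo n i j) (fun i => BbarTwo n i j)).PosDef := by
  rw [submatrix_succAbove_mul_transpose, BbarTwo_mul_transpose, sub_sub, ← two_smul ℝ]
  rcases BbarTwo_column_eq_single_or_const j with ⟨k, hk⟩ | hD
  · have hn : 0 < n := k.pos
    rw [hk]
    refine posDef_smul_one_add_vecMulVec_sub_smul_vecMulVec fun x hx => ?_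
    rw [single_one_dotProduct]
    exact mul_sq_apply_lt_mul_dotProduct_self_add_sq two_pos (by positivity) hx
  · rw [hD]
    refine posDef_smul_one_add_vecMulVec_sub_smul_vecMulVec fun x hx => ?_
    nlinarith [sq_dotProduct_le_mul (fun _ : Fin n => 1 / √n) x, dotProduct_self_pos hx,
      const_inv_sqrt_dotProduct_self_le_one n]

end BbarTwo

theorem BbarTwo_one_resilient_general {n : ℕ} (j : Fin (2 * n + 1)) :
    (∀ h : Fin n → ℝ, eNorm h = 1 →
      |(fun i => BbarTwo n i j) ⬝ᵥ h| <
        eNorm (((BbarTwo n).submatrix id j.succAbove)ᵀ.mulVec h)) ∧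
    ((BbarTwo n).submatrix id j.succAbove *
        ((BbarTwo n).submatrix id j.succAbove)ᵀ -
      vecMulVec (fun i => BbarTwo n i j) (fun i => BbarTwo n i j)).PosDef := by
  have hpd := posDef_BbarTwo_submatrix_mul_transpose_sub_vecMulVec j
  refine ⟨fun h hh => abs_dotProduct_lt_eNorm_of_posDef hpd ?_, hpd⟩
  rintro rfl
  simp [eNorm] at hh

theorem BbarTwo_one_resilient {n : ℕ} (hn : 1 ≤ n) (j : Fin (2 * n + 1)) :
    (∀ h : Fin n → ℝ, eNorm h = 1 →
      |(fun i => BbarTwo n i j) ⬝ᵥ h| <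
        eNorm (((BbarTwo n).submatrix id j.succAbove)ᵀ.mulVec h)) ∧
    ((BbarTwo n).submatrix id j.succAbove *
        ((BbarTwo n).submatrix id j.succAbove)ᵀ -
      vecMulVec (fun i => BbarTwo n i j) (fun i => BbarTwo n i j)).PosDef :=
  BbarTwo_one_resilient_general j
end

section
/- Let V ∈ ℝ^{n×m} with m ≥ 2n + 1, suppose V has orthonormal rows (VVᵀ = I_n) and that all columns of V have the same Euclidean norm. Then for every column C of V, the matrix I_n − 2CCᵀ is positive definite (equivalently, removing any single column leaves B with BBᵀ − CCᵀ ≻ 0); hence V is 1-resilient. -/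
/-!
Taking the trace of `V * Vᵀ = 1` shows that the squared column norms sum to `n`; as they are all
equal, each is `n / m < 1 / 2`. For a vector `c` with `2 ‖c‖² < 1`, Cauchy–Schwarz gives
`xᵀ (1 - 2 c cᵀ) x = ‖x‖² - 2 (c ⬝ x)² ≥ (1 - 2 ‖c‖²) ‖x‖² > 0` for `x ≠ 0`.
-/

open Matrix

namespace Matrix

variable {ι κ : Type*} [Fintype ι] [Fintype κ]

theorem dotProduct_one_sub_smul_vecMulVec_self_mulVec [DecidableEq ι] (a : ℝ) (c x : ι → ℝ) :
    x ⬝ᵥ ((1 - a • vecMulVec c c) *ᵥ x) = x ⬝ᵥ x - a * (c ⬝ᵥ x) ^ 2 := by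
  rw [sub_mulVec, one_mulVec, smul_mulVec, vecMulVec_mulVec, dotProduct_sub, dotProduct_smul,
    op_smul_eq_smul, dotProduct_smul, dotProduct_comm x c, smul_eq_mul, smul_eq_mul]
  ring

theorem posDef_one_sub_smul_vecMulVec_self [DecidableEq ι] {a : ℝ} {c : ι → ℝ}
    (h : a * (c ⬝ᵥ c) < 1) : (1 - a • vecMulVec c c).PosDef := by
  rw [posDef_iff_dotProduct_mulVec]
  refine ⟨?_, fun x hx => ?_⟩
  · ext i k
    simp [vecMulVec_apply, one_apply, eq_comm, mul_comm]
  · have hx_pos : 0 < x ⬝ᵥ x := by simpa using dotProduct_star_self_pos_iff.mpr hx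
    have cauchy_schwarz : (c ⬝ᵥ x) ^ 2 ≤ (c ⬝ᵥ c) * (x ⬝ᵥ x) := by
      simpa only [dotProduct, sq] using Finset.sum_mul_sq_le_sq_mul_sq Finset.univ c x
    rw [star_trivial, dotProduct_one_sub_smul_vecMulVec_self_mulVec]
    rcases le_total a 0 with ha | ha
    · nlinarith [sq_nonneg (c ⬝ᵥ x)]
    · nlinarith [mul_le_mul_of_nonneg_left cauchy_schwarz ha]

theorem sum_dotProduct_col_self_of_mul_transpose_eq_one {R : Type*} [CommSemiring R]
    [DecidableEq ι] {V : Matrix ι κ R} (hV : V * Vᵀ = 1) :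
    ∑ j, Vᵀ j ⬝ᵥ Vᵀ j = Fintype.card ι := by
  rw [← trace_one, ← hV]
  simp only [trace, diag, mul_apply, transpose_apply, dotProduct]
  exact Finset.sum_comm

end Matrix

theorem eNorm_sq {k : ℕ} (v : Fin k → ℝ) : eNorm v ^ 2 = v ⬝ᵥ v := by
  rw [eNorm, Real.sq_sqrt (by positivity)]
  simp only [dotProduct, sq]

theorem orthonormal_rows_equal_columns_one_resilient {n m : ℕ}
    (V : Matrix (Fin n) (Fin m) ℝ) (hm : 2 * n + 1 ≤ m) (hV : V * Vᵀ = 1)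
    (hcol : ∀ j k : Fin m, eNorm (fun i => V i j) = eNorm (fun i => V i k)) :
    ∀ j : Fin m, ((1 : Matrix (Fin n) (Fin n) ℝ) -
      (2 : ℝ) • vecMulVec (fun i => V i j) (fun i => V i j)).PosDef := by
  intro j
  apply posDef_one_sub_smul_vecMulVec_self
  have equal_cols : ∀ k, Vᵀ k ⬝ᵥ Vᵀ k = Vᵀ j ⬝ᵥ Vᵀ j := fun k =>
    (eNorm_sq _).symm.trans ((congrArg (· ^ 2) (hcol k j)).trans (eNorm_sq _))
  have sum_cols : (m : ℝ) * (Vᵀ j ⬝ᵥ Vᵀ j) = n := by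
    simpa [equal_cols] using sum_dotProduct_col_self_of_mul_transpose_eq_one hV
  have hm : (2 * n + 1 : ℝ) ≤ m := by exact_mod_cast hm
  change 2 * (Vᵀ j ⬝ᵥ Vᵀ j) < 1
  nlinarith [dotProduct_self_star_nonneg (Vᵀ j)]
end

section
/- Let n, p ∈ ℕ with n, p ≥ 1, and let B̄_{2p} = [I_n I_n … I_n D] ∈ ℝ^{n×(2pn+1)} consist of 2p copies of the identity matrix I_n followed by the column D = (1/√n)·(1, …, 1)ᵀ ∈ ℝⁿ. Then for every choice of p pairwise distinct columns of B̄_{2p}, letting C ∈ ℝ^{n×p} be the matrix of those columns and B the matrix of the remaining columns, one has ‖Cᵀh‖ < ‖Bᵀh‖ for every unit vector h ∈ ℝⁿ (equivalently BBᵀ − CCᵀ ≻ 0); hence B̄_{2p} is p-resilient. -/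
open Matrix

noncomputable def BbarCopies (n p : ℕ) : Matrix (Fin n) (Fin (2 * p * n + 1)) ℝ :=
  Matrix.of fun i j =>
    if j.val < 2 * p * n then (if i.val = j.val % n then 1 else 0)
    else 1 / Real.sqrt n

/-!
With `t = ‖h‖²` and `S = ∑ hᵢ`, the Gram form of `B̄` is `‖B̄ᵀh‖² = 2p t + S²/n`. Every column `c`
of `B̄` is a unit vector, so `(cᵀh)² ≤ t`; moreover `(cᵀh)² < t + S²/n`, since equality in
Cauchy–Schwarz for `c = eᵢ` forces `h ∥ eᵢ` and then `S ≠ 0`. As `BBᵀ - CCᵀ = B̄B̄ᵀ - 2CCᵀ`,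
bounding one removed column by the strict and the other `p - 1` by the weak estimate gives
`2‖Cᵀh‖² < 2p t + S²/n = ‖B̄ᵀh‖²`.
-/

open Finset

section GramForm

variable {m k : Type*} [Fintype m] [Fintype k]

theorem dotProduct_mul_transpose_mulVec (A : Matrix m k ℝ) (x : m → ℝ) :
    x ⬝ᵥ ((A * Aᵀ) *ᵥ x) = ∑ j, (x ᵥ* A) j ^ 2 := by
  rw [← mulVec_mulVec, dotProduct_mulVec, mulVec_transpose]
  simp only [dotProduct, sq]

theorem posDef_mul_transpose_sub_two_smul_submatrix {l : Type*} [Fintype l]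
    (A : Matrix m k ℝ) (f : l → k)
    (h : ∀ x : m → ℝ, x ≠ 0 → 2 * ∑ i, (x ᵥ* A) (f i) ^ 2 < ∑ j, (x ᵥ* A) j ^ 2) :
    (A * Aᵀ - (2 : ℝ) • (A.submatrix id f * (A.submatrix id f)ᵀ)).PosDef := by
  refine posDef_iff_dotProduct_mulVec.mpr ⟨?_, fun x hx => ?_⟩
  · have hA := isHermitian_mul_conjTranspose_self A
    have hC := isHermitian_mul_conjTranspose_self (A.submatrix id f)
    rw [conjTranspose_eq_transpose_of_trivial] at hA hC
    exact hA.sub (hC.smul (IsSelfAdjoint.all 2))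
  · rw [star_trivial, sub_mulVec, dotProduct_sub, smul_mulVec, dotProduct_smul, smul_eq_mul,
      dotProduct_mul_transpose_mulVec, dotProduct_mul_transpose_mulVec]
    exact sub_pos.mpr (h x hx)

end GramForm

section SumSq

variable {ι : Type*} [Fintype ι]

theorem sq_sum_div_card_le_sum_sq (x : ι → ℝ) :
    (∑ i, x i) ^ 2 / Fintype.card ι ≤ ∑ i, x i ^ 2 :=
  div_le_of_le_mul₀ (Nat.cast_nonneg _) (sum_nonneg fun i _ => sq_nonneg (x i))
    (by simpa [mul_comm] using sq_sum_le_card_mul_sum_sq (s := univ) (f := x))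

theorem sq_lt_sum_sq_add_sq_sum_div_card {x : ι → ℝ} (hx : x ≠ 0) (i : ι) :
    x i ^ 2 < ∑ j, x j ^ 2 + (∑ j, x j) ^ 2 / Fintype.card ι := by
  classical
  rw [← add_sum_erase _ _ (mem_univ i)]
  rcases (sum_nonneg fun j _ => sq_nonneg (x j) :
      0 ≤ ∑ j ∈ univ.erase i, x j ^ 2).eq_or_lt with hrest | hrest
  · -- then `x` is a nonzero multiple of the `i`-th basis vector, so `∑ j, x j = x i ≠ 0`
    have hzero : ∀ j, j ≠ i → x j = 0 := fun j hj => by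
      simpa using (sum_eq_zero_iff_of_nonneg fun j _ => sq_nonneg (x j)).mp hrest.symm j
        (mem_erase.mpr ⟨hj, mem_univ j⟩)
    have hxi : x i ≠ 0 := fun h0 => hx (funext fun j => by
      by_cases hj : j = i
      · rw [hj, h0, Pi.zero_apply]
      · exact hzero j hj)
    have hcard : (0 : ℝ) < Fintype.card ι := by exact_mod_cast Fintype.card_pos_iff.mpr ⟨i⟩
    rw [← hrest, Fintype.sum_eq_single i hzero]
    have : 0 < x i ^ 2 / Fintype.card ι := by positivity
    linarith
  · have : 0 ≤ (∑ j, x j) ^ 2 / Fintype.card ι := by positivity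
    linarith

end SumSq

section BbarCopies

variable {n p : ℕ} (x : Fin n → ℝ)

theorem vecMul_BbarCopies_copy (a : Fin (2 * p)) (i : Fin n) :
    (x ᵥ* BbarCopies n p) (finProdFinEquiv (a, i)).castSucc = x i := by
  have hmod : (i + n * a : ℕ) % n = i := by
    rw [Nat.add_mul_mod_self_left, Nat.mod_eq_of_lt i.isLt]
  have hlt : (i + n * a : ℕ) < 2 * p * n := (finProdFinEquiv (a, i)).isLt
  simp [vecMul, dotProduct, BbarCopies, finProdFinEquiv, hlt, hmod, Fin.val_inj]

theorem vecMul_BbarCopies_last :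
    (x ᵥ* BbarCopies n p) (Fin.last _) = (∑ i, x i) / √n := by
  simp [vecMul, dotProduct, BbarCopies, sum_mul, div_eq_mul_inv]

theorem vecMul_BbarCopies_eq (j : Fin (2 * p * n + 1)) :
    (x ᵥ* BbarCopies n p) j = (∑ i, x i) / √n ∨ ∃ i, (x ᵥ* BbarCopies n p) j = x i := by
  rcases Fin.eq_castSucc_or_eq_last j with ⟨j, rfl⟩ | rfl
  · obtain ⟨⟨a, i⟩, rfl⟩ := finProdFinEquiv.surjective j
    exact Or.inr ⟨i, vecMul_BbarCopies_copy x a i⟩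
  · exact Or.inl (vecMul_BbarCopies_last x)

theorem sum_sq_vecMul_BbarCopies :
    ∑ j, (x ᵥ* BbarCopies n p) j ^ 2 = 2 * p * ∑ i, x i ^ 2 + (∑ i, x i) ^ 2 / n := by
  rw [Fin.sum_univ_castSucc, ← finProdFinEquiv.sum_comp, Fintype.sum_prod_type]
  simp [vecMul_BbarCopies_copy, vecMul_BbarCopies_last, div_pow, Real.sq_sqrt, mul_sum]

theorem sq_vecMul_BbarCopies_le (j : Fin (2 * p * n + 1)) :
    (x ᵥ* BbarCopies n p) j ^ 2 ≤ ∑ i, x i ^ 2 := by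
  rcases vecMul_BbarCopies_eq x j with h | ⟨i, h⟩ <;> rw [h]
  · rw [div_pow, Real.sq_sqrt (Nat.cast_nonneg n)]
    simpa using sq_sum_div_card_le_sum_sq x
  · exact single_le_sum (fun i _ => sq_nonneg (x i)) (mem_univ i)

theorem sq_vecMul_BbarCopies_lt {x : Fin n → ℝ} (hx : x ≠ 0) (j : Fin (2 * p * n + 1)) :
    (x ᵥ* BbarCopies n p) j ^ 2 < ∑ i, x i ^ 2 + (∑ i, x i) ^ 2 / n := by
  rcases vecMul_BbarCopies_eq x j with h | ⟨i, h⟩ <;> rw [h]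
  · have : 0 < ∑ i, x i ^ 2 := by
      obtain ⟨i, hi⟩ := Function.ne_iff.mp hx
      exact sum_pos' (fun i _ => sq_nonneg (x i)) ⟨i, mem_univ i, pow_two_pos_of_ne_zero hi⟩
    rw [div_pow, Real.sq_sqrt (Nat.cast_nonneg n)]
    linarith
  · simpa using sq_lt_sum_sq_add_sq_sum_div_card hx i

end BbarCopies

theorem BbarCopies_p_resilient_general {n p : ℕ} (hp : 1 ≤ p)
    (f : Fin p → Fin (2 * p * n + 1)) :
    (BbarCopies n p * (BbarCopies n p)ᵀ -
      (2 : ℝ) • ((BbarCopies n p).submatrix id f *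
        ((BbarCopies n p).submatrix id f)ᵀ)).PosDef := by
  refine posDef_mul_transpose_sub_two_smul_submatrix _ f fun x hx => ?_
  rw [sum_sq_vecMul_BbarCopies]
  set g := x ᵥ* BbarCopies n p
  obtain ⟨k₀⟩ : Nonempty (Fin p) := ⟨⟨0, hp⟩⟩
  have hrest : ∑ k ∈ univ.erase k₀, g (f k) ^ 2 ≤ (p - 1) * ∑ i, x i ^ 2 := by
    calc ∑ k ∈ univ.erase k₀, g (f k) ^ 2
        ≤ #(univ.erase k₀) • ∑ i, x i ^ 2 :=
          sum_le_card_nsmul _ _ _ fun k _ => sq_vecMul_BbarCopies_le x (f k)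
      _ = (p - 1) * ∑ i, x i ^ 2 := by
          simp [card_erase_of_mem, Nat.cast_sub hp]
  rw [← add_sum_erase _ _ (mem_univ k₀)]
  linarith [sq_vecMul_BbarCopies_le x (f k₀), sq_vecMul_BbarCopies_lt hx (f k₀)]

theorem BbarCopies_p_resilient {n p : ℕ} (hn : 1 ≤ n) (hp : 1 ≤ p)
    (f : Fin p → Fin (2 * p * n + 1)) (hf : Function.Injective f) :
    (BbarCopies n p * (BbarCopies n p)ᵀ -
      (2 : ℝ) • ((BbarCopies n p).submatrix id f *
        ((BbarCopies n p).submatrix id f)ᵀ)).PosDef :=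
  BbarCopies_p_resilient_general hp f
end

section
/- Let B ∈ ℝ^{n×(m−p)} and C ∈ ℝ^{n×p} with F := BBᵀ − CCᵀ positive definite. Then BBᵀ is invertible, the matrix Cᵀ(BBᵀ)⁻¹C is symmetric positive semidefinite, and every eigenvalue λ of Cᵀ(BBᵀ)⁻¹C satisfies 0 ≤ λ < 1; in particular I_p − Cᵀ(BBᵀ)⁻¹C is positive definite. -/
/-!
`B * Bᵀ = F + C * Cᵀ` is positive definite. The matrix `1 - Cᵀ (B Bᵀ)⁻¹ C` is the Schur
complement of `B Bᵀ` in the block matrix `[[B Bᵀ, C], [Cᵀ, 1]]`, whose Schur complement of the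
block `1` is `F`; hence it is positive semidefinite, and it is invertible because its determinant
is `det F / det (B Bᵀ) ≠ 0`. The eigenvalue bounds then follow from `0 ≤ K` and `0 < 1 - K` for
`K = Cᵀ (B Bᵀ)⁻¹ C`.
-/

open Matrix
open scoped ComplexOrder

namespace Matrix

section Field

variable {α m n : Type*} [Field α] [Fintype m] [Fintype n] [DecidableEq m] [DecidableEq n]

theorem det_one_sub_mul_inv_mul {A : Matrix m m α} (hA : IsUnit A.det) (B : Matrix n m α)
    (C : Matrix m n α) : det (1 - B * A⁻¹ * C) = det (A - C * B) / det A := by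
  rw [det_one_sub_mul_comm, ← Matrix.mul_assoc, ← mul_nonsing_inv A hA, ← Matrix.sub_mul,
    det_mul, det_nonsing_inv, Ring.inverse_eq_inv', div_eq_mul_inv]

theorem mem_spectrum_of_hasEigenvalue_toLin' {A : Matrix n n α} {μ : α}
    (hμ : Module.End.HasEigenvalue (toLin' A) μ) : μ ∈ spectrum α A :=
  spectrum_toLin' A ▸ hμ.mem_spectrum

end Field

variable {𝕜 m n : Type*} [RCLike 𝕜] [Fintype m] [Fintype n]

theorem PosDef.of_posDef_sub_mul_conjTranspose {A : Matrix m m 𝕜} {C : Matrix m n 𝕜}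
    (h : (A - C * Cᴴ).PosDef) : A.PosDef := by
  simpa using h.add_posSemidef (posSemidef_self_mul_conjTranspose C)

theorem PosSemidef.one_sub_conjTranspose_mul_inv_mul [DecidableEq m] [DecidableEq n]
    {A : Matrix m m 𝕜} {C : Matrix m n 𝕜} (hA : A.PosDef) (h : (A - C * Cᴴ).PosSemidef) :
    (1 - Cᴴ * A⁻¹ * C).PosSemidef := by
  have := hA.isUnit.invertible
  have : Invertible (1 : Matrix n n 𝕜) := invertibleOne
  have hblock : (fromBlocks A C Cᴴ 1).PosSemidef := by
    simpa using (PosDef.fromBlocks₂₂ A C PosDef.one).2 (by simpa using h)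
  exact (PosDef.fromBlocks₁₁ C 1 hA).1 hblock

theorem PosDef.one_sub_conjTranspose_mul_inv_mul [DecidableEq m] [DecidableEq n]
    {A : Matrix m m 𝕜} {C : Matrix m n 𝕜} (hA : A.PosDef) (h : (A - C * Cᴴ).PosDef) :
    (1 - Cᴴ * A⁻¹ * C).PosDef := by
  rw [(PosSemidef.one_sub_conjTranspose_mul_inv_mul hA h.posSemidef).posDef_iff_det_ne_zero,
    det_one_sub_mul_inv_mul ((isUnit_iff_isUnit_det _).1 hA.isUnit)]
  exact div_ne_zero h.det_pos.ne' hA.det_pos.ne'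

variable [DecidableEq n]

theorem PosSemidef.nonneg_of_hasEigenvalue_toLin' {A : Matrix n n 𝕜} (hA : A.PosSemidef)
    {μ : 𝕜} (hμ : Module.End.HasEigenvalue (toLin' A) μ) : 0 ≤ μ :=
  (posSemidef_iff_isHermitian_and_spectrum_nonneg.1 hA).2
    (mem_spectrum_of_hasEigenvalue_toLin' hμ)

theorem PosDef.pos_of_hasEigenvalue_toLin' {A : Matrix n n 𝕜} (hA : A.PosDef) {μ : 𝕜}
    (hμ : Module.End.HasEigenvalue (toLin' A) μ) : 0 < μ := by
  refine (hA.posSemidef.nonneg_of_hasEigenvalue_toLin' hμ).lt_of_ne ?_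
  rintro rfl
  exact (spectrum.zero_notMem_iff 𝕜).2 hA.isUnit (mem_spectrum_of_hasEigenvalue_toLin' hμ)

theorem lt_one_of_hasEigenvalue_toLin'_of_posDef_one_sub {A : Matrix n n 𝕜}
    (h : (1 - A).PosDef) {μ : 𝕜} (hμ : Module.End.HasEigenvalue (toLin' A) μ) : μ < 1 := by
  refine sub_pos.1 (h.pos_of_hasEigenvalue_toLin' ?_)
  rwa [map_sub, toLin'_one, ← one_smul 𝕜 LinearMap.id, Module.End.hasEigenvalue_sub'_iff,
    sub_sub_cancel]

end Matrix

theorem eigenvalues_CtPC_lt_one {n m p : ℕ} (B : Matrix (Fin n) (Fin (m - p)) ℝ)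
    (C : Matrix (Fin n) (Fin p) ℝ) (hF : (B * Bᵀ - C * Cᵀ).PosDef) :
    IsUnit (B * Bᵀ) ∧
    (Cᵀ * (B * Bᵀ)⁻¹ * C).PosSemidef ∧
    (∀ μ : ℝ, Module.End.HasEigenvalue
        (Matrix.toLin' (Cᵀ * (B * Bᵀ)⁻¹ * C)) μ → 0 ≤ μ ∧ μ < 1) ∧
    ((1 : Matrix (Fin p) (Fin p) ℝ) - Cᵀ * (B * Bᵀ)⁻¹ * C).PosDef := by
  rw [← conjTranspose_eq_transpose_of_trivial C] at hF ⊢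
  have hM : (B * Bᵀ).PosDef := hF.of_posDef_sub_mul_conjTranspose
  have hK : (Cᴴ * (B * Bᵀ)⁻¹ * C).PosSemidef := hM.inv.posSemidef.conjTranspose_mul_mul_same C
  have hIK := hM.one_sub_conjTranspose_mul_inv_mul hF
  exact ⟨hM.isUnit, hK, fun μ hμ => ⟨hK.nonneg_of_hasEigenvalue_toLin' hμ,
    lt_one_of_hasEigenvalue_toLin'_of_posDef_one_sub hIK hμ⟩, hIK⟩
end
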